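/- arXiv:1808.07764 — 6 statements merged into one kernel-verified Lean document; each statement's English description precedes it below -/
import Mathlib

section
/- If T is a tree of order at least 3, then there exists a minimum disjunctive dominating set of T that contains no leaf of T. -/
open SimpleGraph

/-- A disjunctive dominating set: every vertex not in `D` has a neighbor in `D`
or at least two vertices of `D` at distance exactly `2`. -/
def IsDisjDomSet {V : Type*} (G : SimpleGraph V) (D : Set V) : Prop :=
  ∀ v ∉ D, (∃ u ∈ D, G.Adj v u) ∨
    (∃ w₁ ∈ D, ∃ w₂ ∈ D, w₁ ≠ w₂ ∧ G.dist v w₁ = 2 ∧ G.dist v w₂ = 2)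

/-- The disjunctive domination number. -/
noncomputable def disjDomNum {V : Type*} (G : SimpleGraph V) : ℕ :=
  sInf {n | ∃ D : Set V, IsDisjDomSet G D ∧ D.ncard = n}

/-- A leaf is a vertex of degree one. -/
def IsLeaf {V : Type*} (G : SimpleGraph V) (v : V) : Prop :=
  (G.neighborSet v).ncard = 1

/-- A support vertex is a vertex adjacent to a leaf. -/
def IsSupport {V : Type*} (G : SimpleGraph V) (v : V) : Prop :=
  ∃ u, G.Adj v u ∧ IsLeaf G u

section Aux

variable {V : Type*} {G : SimpleGraph V}

lemma aux_univ_isDisjDomSet (G : SimpleGraph V) : IsDisjDomSet G Set.univ :=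
  fun v hv => absurd (Set.mem_univ v) hv

lemma aux_disjDomNum_mem (G : SimpleGraph V) :
    ∃ D : Set V, IsDisjDomSet G D ∧ D.ncard = disjDomNum G := by
  have hne : {n | ∃ D : Set V, IsDisjDomSet G D ∧ D.ncard = n}.Nonempty :=
    ⟨Set.univ.ncard, Set.univ, aux_univ_isDisjDomSet G, rfl⟩
  exact Nat.sInf_mem hne

lemma aux_walk_mem {S : Set V} (hcl : ∀ a ∈ S, ∀ b, G.Adj a b → b ∈ S) :
    ∀ {x z : V}, G.Walk x z → x ∈ S → z ∈ S := by
  intro x z p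
  induction p with
  | nil => exact id
  | cons h _ ih => exact fun hx => ih (hcl _ hx _ h)

end Aux

theorem exists_min_2DD_set_no_leaf {V : Type*} [Fintype V] (G : SimpleGraph V)
    (hT : G.IsTree) (hn : 3 ≤ Fintype.card V) :
    ∃ D : Set V, IsDisjDomSet G D ∧ D.ncard = disjDomNum G ∧ ∀ v ∈ D, ¬ IsLeaf G v := by
  have hconn := hT.isConnected
  obtain ⟨D0, hD0, hcard0⟩ := aux_disjDomNum_mem G
  suffices H : ∀ k, ∀ D : Set V, IsDisjDomSet G D → D.ncard = disjDomNum G →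
      ({x ∈ D | IsLeaf G x}).ncard = k →
      ∃ D', IsDisjDomSet G D' ∧ D'.ncard = disjDomNum G ∧ ∀ v ∈ D', ¬ IsLeaf G v by
    exact H _ D0 hD0 hcard0 rfl
  intro k
  induction k using Nat.strong_induction_on with
  | _ k ih =>
  intro D hD hcard hk
  by_cases hle : ∀ v ∈ D, ¬ IsLeaf G v
  · exact ⟨D, hD, hcard, hle⟩
  push_neg at hle
  obtain ⟨v, hvD, hvleaf⟩ := hle
  obtain ⟨u, hu⟩ := Set.ncard_eq_one.mp hvleaf
  have hadj : G.Adj v u := by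
    have : u ∈ G.neighborSet v := by rw [hu]; exact rfl
    exact this
  have hnbr : ∀ w, G.Adj v w → w = u := by
    intro w hw
    have : w ∈ G.neighborSet v := hw
    rwa [hu] at this
  have hvu : v ≠ u := G.ne_of_adj hadj
  -- a support vertex of a leaf is not itself a leaf (order ≥ 3)
  have huleaf : ¬ IsLeaf G u := by
    intro hul
    obtain ⟨w, hw⟩ := Set.ncard_eq_one.mp hul
    have hwv : w = v := by
      have : v ∈ G.neighborSet u := hadj.symm
      rw [hw] at this
      exact this.symm
    rw [hwv] at hw
    have hcl : ∀ a ∈ ({u, v} : Set V), ∀ b, G.Adj a b → b ∈ ({u, v} : Set V) := by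
      rintro a ha b hab
      rcases ha with h | h
      · rw [h] at hab
        have hb : b ∈ G.neighborSet u := hab
        rw [hw] at hb
        exact Or.inr hb
      · rw [h] at hab
        exact Or.inl (hnbr b hab)
    have huniv : ∀ z, z ∈ ({u, v} : Set V) := by
      intro z
      obtain ⟨p⟩ := hconn.preconnected u z
      exact aux_walk_mem hcl p (Or.inl rfl)
    have h1 : ({u, v} : Set V) = Set.univ := Set.eq_univ_of_forall huniv
    have h2 : ({u, v} : Set V).ncard ≤ 2 := by
      refine le_trans (Set.ncard_insert_le _ _) ?_
      simp [Set.ncard_singleton]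
    rw [h1, Set.ncard_univ, Nat.card_eq_fintype_card] at h2
    omega
  -- distance 2 to v forces adjacency to u
  have hdist2 : ∀ w, G.dist w v = 2 → G.Adj w u := by
    intro w hw
    obtain ⟨p, hp⟩ := hconn.exists_walk_length_eq_dist w v
    rw [hw] at hp
    have h01 := p.adj_getVert_succ (by omega : 0 < p.length)
    have h12 := p.adj_getVert_succ (by omega : 1 < p.length)
    have hg0 : p.getVert 0 = w := p.getVert_zero
    have hg2 : p.getVert (1 + 1) = v := by
      have := p.getVert_length
      rwa [hp] at this
    rw [hg2] at h12
    have hmid : p.getVert 1 = u := hnbr _ h12.symm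
    rw [hg0, hmid] at h01
    exact h01
  -- the swapped set
  have hD' : IsDisjDomSet G (insert u (D \ {v})) := by
    intro w hw
    by_cases hwv : w = v
    · subst hwv; exact Or.inl ⟨u, Set.mem_insert _ _, hadj⟩
    have hwD : w ∉ D := fun h => hw (Set.mem_insert_of_mem _ ⟨h, hwv⟩)
    rcases hD w hwD with ⟨x, hxD, hxadj⟩ | ⟨w₁, h1, w₂, h2, hne, hd1, hd2⟩
    · by_cases hxv : x = v
      · subst hxv
        have : w = u := hnbr w hxadj.symm
        subst this
        exact absurd (Set.mem_insert _ _) hw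
      · exact Or.inl ⟨x, Set.mem_insert_of_mem _ ⟨hxD, hxv⟩, hxadj⟩
    · by_cases h1v : w₁ = v
      · subst h1v; exact Or.inl ⟨u, Set.mem_insert _ _, hdist2 w hd1⟩
      by_cases h2v : w₂ = v
      · subst h2v; exact Or.inl ⟨u, Set.mem_insert _ _, hdist2 w hd2⟩
      exact Or.inr ⟨w₁, Set.mem_insert_of_mem _ ⟨h1, h1v⟩,
        w₂, Set.mem_insert_of_mem _ ⟨h2, h2v⟩, hne, hd1, hd2⟩
  have hfin : (D \ {v} : Set V).Finite := Set.toFinite _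
  have hdiffcard : (D \ {v} : Set V).ncard = D.ncard - 1 :=
    Set.ncard_diff_singleton_of_mem hvD
  have hDpos : 1 ≤ D.ncard := (Set.ncard_pos (Set.toFinite _)).mpr ⟨v, hvD⟩
  -- u is not in D
  have huD : u ∉ D := by
    intro huD
    have heq : insert u (D \ {v}) = D \ {v} :=
      Set.insert_eq_self.mpr ⟨huD, fun h => hvu h.symm⟩
    have hle' : disjDomNum G ≤ (D \ {v} : Set V).ncard :=
      Nat.sInf_le ⟨D \ {v}, heq ▸ hD', rfl⟩
    rw [hdiffcard, hcard] at hle'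
    omega
  have hunotdiff : u ∉ (D \ {v} : Set V) := fun h => huD h.1
  have hcard' : (insert u (D \ {v})).ncard = disjDomNum G := by
    rw [Set.ncard_insert_of_notMem hunotdiff hfin, hdiffcard, hcard]
    have : 1 ≤ disjDomNum G := hcard ▸ hDpos
    omega
  -- leaf count strictly decreases
  have hsub : {x ∈ insert u (D \ {v}) | IsLeaf G x} ⊆ {x ∈ D | IsLeaf G x} \ {v} := by
    rintro x ⟨hx, hxl⟩
    rcases hx with rfl | hx
    · exact absurd hxl huleaf
    · exact ⟨⟨hx.1, hxl⟩, hx.2⟩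
  have hlt : ({x ∈ insert u (D \ {v}) | IsLeaf G x}).ncard < k := by
    calc ({x ∈ insert u (D \ {v}) | IsLeaf G x}).ncard
        ≤ ({x ∈ D | IsLeaf G x} \ {v}).ncard :=
          Set.ncard_le_ncard hsub (Set.toFinite _)
      _ < ({x ∈ D | IsLeaf G x}).ncard :=
          Set.ncard_diff_singleton_lt_of_mem ⟨hvD, hvleaf⟩ (Set.toFinite _)
      _ = k := hk
  exact ih _ hlt (insert u (D \ {v})) hD' hcard' rfl
end

section
/- Let T be a tree of order at least 3 and let D be a minimum disjunctive dominating set of T containing no leaf. If v is a support vertex of T of degree 2, then v ∈ D. -/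
open SimpleGraph

theorem degree_two_support_mem {V : Type*} [Fintype V] (G : SimpleGraph V)
    (hT : G.IsTree) (hn : 3 ≤ Fintype.card V) (D : Set V)
    (hD : IsDisjDomSet G D) (hmin : D.ncard = disjDomNum G)
    (hnl : ∀ v ∈ D, ¬ IsLeaf G v) (v : V) (hs : IsSupport G v)
    (hdeg : (G.neighborSet v).ncard = 2) : v ∈ D := by
  obtain ⟨u, hadj, hleaf⟩ := hs
  -- u's neighbor set is {v}
  have hnu : G.neighborSet u = {v} := by
    obtain ⟨a, ha⟩ := Set.ncard_eq_one.mp hleaf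
    have hv : v ∈ G.neighborSet u := hadj.symm
    rw [ha] at hv ⊢
    simp_all
  have huD : u ∉ D := fun h => hnl u h hleaf
  by_contra hvD
  rcases hD u huD with ⟨u', hu'D, hu'adj⟩ | ⟨w₁, hw₁D, w₂, hw₂D, hne, hd₁, hd₂⟩
  · have : u' ∈ G.neighborSet u := hu'adj
    rw [hnu] at this
    exact hvD (this ▸ hu'D)
  · -- any vertex at distance 2 from u is a neighbor of v other than u
    have key : ∀ w, G.dist u w = 2 → w ∈ G.neighborSet v ∧ w ≠ u := by
      intro w hw
      obtain ⟨p, hp⟩ := SimpleGraph.exists_walk_of_dist_ne_zero (by omega : G.dist u w ≠ 0)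
      rw [hw] at hp
      have h01 : G.Adj (p.getVert 0) (p.getVert 1) :=
        p.adj_getVert_succ (by omega)
      have h12 : G.Adj (p.getVert 1) (p.getVert 2) :=
        p.adj_getVert_succ (by omega)
      rw [p.getVert_zero] at h01
      have hlast : p.getVert 2 = w := by
        have := p.getVert_length
        rwa [hp] at this
      rw [hlast] at h12
      have h1v : p.getVert 1 = v := by
        have : p.getVert 1 ∈ G.neighborSet u := h01
        rwa [hnu, Set.mem_singleton_iff] at this
      rw [h1v] at h12
      refine ⟨h12, ?_⟩
      rintro rfl
      simp [SimpleGraph.dist_self] at hw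
    obtain ⟨hw₁v, hw₁u⟩ := key w₁ hd₁
    obtain ⟨hw₂v, hw₂u⟩ := key w₂ hd₂
    -- neighborSet v = {u, w} for some w
    obtain ⟨a, b, hab, hset⟩ := Set.ncard_eq_two.mp hdeg
    have huv : u ∈ G.neighborSet v := hadj
    rw [hset] at huv hw₁v hw₂v
    rcases huv with rfl | rfl
    · rcases hw₁v with rfl | rfl
      · exact hw₁u rfl
      · rcases hw₂v with rfl | rfl
        · exact hw₂u rfl
        · exact hne rfl
    · rcases hw₁v with rfl | rfl
      · rcases hw₂v with rfl | rfl
        · exact hne rfl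
        · exact hw₂u rfl
      · exact hw₁u rfl
end

section
/- If T is a nontrivial tree of order n with l leaves and s support vertices, then γ²ᵈ(T) ≤ (n + l + s)/4. -/
open SimpleGraph

section Aux
variable {V : Type*} {G : SimpleGraph V}

lemma path_length_eq_dist (hT : G.IsTree) {ρ v : V} (p : G.Walk ρ v) (hp : p.IsPath) :
    p.length = G.dist ρ v := by
  obtain ⟨q, hq, hlen⟩ := (hT.isConnected ρ v).exists_path_of_dist
  have h : (⟨p, hp⟩ : G.Path ρ v) = ⟨q, hq⟩ := hT.IsAcyclic.path_unique _ _
  rw [← hlen]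
  exact congrArg (fun x : G.Path ρ v => x.1.length) h

lemma isPath_concat' {u v w : V} {p : G.Walk u v} (hp : p.IsPath) (h : G.Adj v w)
    (hw : w ∉ p.support) : (p.concat h).IsPath := by
  rw [← Walk.isPath_reverse_iff, Walk.reverse_concat]
  exact hp.reverse.cons (by simpa using hw)

lemma adj_dist [DecidableEq V] (hT : G.IsTree) {ρ u v : V} (h : G.Adj u v) :
    G.dist ρ v = G.dist ρ u + 1 ∨ G.dist ρ u = G.dist ρ v + 1 := by
  obtain ⟨q, hq, hlen⟩ := (hT.isConnected ρ u).exists_path_of_dist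
  by_cases hv : v ∈ q.support
  · right
    have h1 : (q.takeUntil v hv).length = G.dist ρ v :=
      path_length_eq_dist hT _ (hq.takeUntil hv)
    have hd : (q.dropUntil v hv).IsPath := hq.dropUntil hv
    have hsingle : (Walk.cons h.symm (Walk.nil : G.Walk u u)).IsPath := by
      simp [Walk.cons_isPath_iff, h.ne']
    have heq : (⟨q.dropUntil v hv, hd⟩ : G.Path v u) = ⟨Walk.cons h.symm Walk.nil, hsingle⟩ :=
      hT.IsAcyclic.path_unique _ _
    have hlen2 : (q.dropUntil v hv).length = 1 := by
      have := congrArg (fun x : G.Path v u => x.1.length) heq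
      simpa using this
    have hspec := congrArg Walk.length (q.take_spec hv)
    rw [Walk.length_append] at hspec
    omega
  · left
    have := path_length_eq_dist hT (q.concat h) (isPath_concat' hq h hv)
    rw [Walk.length_concat] at this
    omega

lemma not_mem_support_of_dist_lt [DecidableEq V] (hT : G.IsTree) {ρ v x : V} {q : G.Walk ρ x}
    (hq : q.IsPath) (hlt : q.length < G.dist ρ v) : v ∉ q.support := by
  intro hv
  have h1 : (q.takeUntil v hv).length = G.dist ρ v :=
    path_length_eq_dist hT _ (hq.takeUntil hv)
  have := Walk.length_takeUntil_le q hv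
  omega

lemma parent_unique [DecidableEq V] (hT : G.IsTree) {ρ v p₁ p₂ : V} (h1 : G.Adj v p₁) (h2 : G.Adj v p₂)
    (hd1 : G.dist ρ p₁ + 1 = G.dist ρ v) (hd2 : G.dist ρ p₂ + 1 = G.dist ρ v) : p₁ = p₂ := by
  obtain ⟨q1, hq1, hlen1⟩ := (hT.isConnected ρ p₁).exists_path_of_dist
  obtain ⟨q2, hq2, hlen2⟩ := (hT.isConnected ρ p₂).exists_path_of_dist
  have hv1 : v ∉ q1.support := not_mem_support_of_dist_lt hT hq1 (by omega)
  have hv2 : v ∉ q2.support := not_mem_support_of_dist_lt hT hq2 (by omega)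
  have hp1 : (q1.concat h1.symm).IsPath := isPath_concat' hq1 h1.symm hv1
  have hp2 : (q2.concat h2.symm).IsPath := isPath_concat' hq2 h2.symm hv2
  have heq : (⟨q1.concat h1.symm, hp1⟩ : G.Path ρ v) = ⟨q2.concat h2.symm, hp2⟩ :=
    hT.IsAcyclic.path_unique _ _
  have := Walk.concat_inj (congrArg (fun x : G.Path ρ v => x.1) heq)
  exact this.1

lemma dist_two_up (hT : G.IsTree) {ρ v c x : V} (h1 : G.Adj v c) (h2 : G.Adj c x)
    (hd : G.dist ρ x = G.dist ρ v + 2) : G.dist v x = 2 := by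
  have hle : G.dist v x ≤ 2 := by
    have := SimpleGraph.dist_le (Walk.cons h1 (Walk.cons h2 Walk.nil))
    simpa using this
  have htri : G.dist ρ x ≤ G.dist ρ v + G.dist v x := hT.isConnected.dist_triangle
  omega

lemma dist_two_down (hT : G.IsTree) {ρ v p q : V} (h1 : G.Adj v p) (h2 : G.Adj p q)
    (hd : G.dist ρ q + 2 = G.dist ρ v) : G.dist v q = 2 := by
  have hle : G.dist v q ≤ 2 := by
    have := SimpleGraph.dist_le (Walk.cons h1 (Walk.cons h2 Walk.nil))
    simpa using this
  have htri : G.dist ρ v ≤ G.dist ρ q + G.dist q v := hT.isConnected.dist_triangle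
  have hcomm : G.dist q v = G.dist v q := SimpleGraph.dist_comm
  omega

lemma exists_parent (hT : G.IsTree) {ρ v : V} (hv : v ≠ ρ) :
    ∃ p, G.Adj v p ∧ G.dist ρ p + 1 = G.dist ρ v := by
  obtain ⟨q, hq, hlen⟩ := (hT.isConnected ρ v).exists_path_of_dist
  obtain ⟨x, h, rwalk, hr⟩ := Walk.exists_eq_cons_of_ne hv q.reverse
  have hrpath : rwalk.IsPath := by
    have := hq.reverse
    rw [hr] at this
    exact this.of_cons
  refine ⟨x, h, ?_⟩
  have hlx : rwalk.reverse.length = G.dist ρ x :=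
    path_length_eq_dist hT _ hrpath.reverse
  have : q.reverse.length = rwalk.length + 1 := by rw [hr]; simp
  simp only [Walk.length_reverse] at this hlx
  omega


lemma exists_other_neighbor (h : G.Adj v c) (hnl : ¬ IsLeaf G v) :
    ∃ x, G.Adj v x ∧ x ≠ c := by
  by_contra hx
  push_neg at hx
  apply hnl
  have hset : G.neighborSet v = {c} :=
    Set.eq_singleton_iff_unique_mem.mpr ⟨h, fun x hx' => hx x hx'⟩
  rw [IsLeaf, hset, Set.ncard_singleton]

lemma leaf_unique_neighbor (hl : IsLeaf G v) (h1 : G.Adj v a) (h2 : G.Adj v b) : a = b := by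
  obtain ⟨c, hc⟩ := Set.ncard_eq_one.mp hl
  have ha : a ∈ G.neighborSet v := h1
  have hb : b ∈ G.neighborSet v := h2
  rw [hc] at ha hb
  rw [Set.mem_singleton_iff.mp ha, Set.mem_singleton_iff.mp hb]

lemma exists_leaf [Fintype V] [DecidableEq V] (hT : G.IsTree) (hn : 2 ≤ Fintype.card V) :
    ∃ v, IsLeaf G v := by
  have hne : Nonempty V := Fintype.card_pos_iff.mp (by omega)
  obtain ⟨ρ⟩ := hne
  obtain ⟨x, -, hx⟩ := Finset.exists_max_image Finset.univ (G.dist ρ) ⟨ρ, Finset.mem_univ ρ⟩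
  have hxpos : 1 ≤ G.dist ρ x := by
    by_contra hc
    push_neg at hc
    have hall : ∀ v : V, v = ρ := by
      intro v
      have h0 : G.dist ρ v = 0 := by
        have := hx v (Finset.mem_univ v)
        omega
      exact ((hT.isConnected.dist_eq_zero_iff).mp h0).symm
    have : Fintype.card V ≤ 1 := Fintype.card_le_one_iff.mpr fun a b => (hall a).trans (hall b).symm
    omega
  have hxρ : x ≠ ρ := by
    intro h
    rw [h, SimpleGraph.dist_self] at hxpos
    omega
  obtain ⟨p, hvp, hp⟩ := exists_parent hT hxρ
  refine ⟨x, ?_⟩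
  have hset : G.neighborSet x = {p} := by
    apply Set.eq_singleton_iff_unique_mem.mpr
    refine ⟨hvp, fun y hy => ?_⟩
    have hy' : G.Adj x y := hy
    rcases adj_dist (ρ := ρ) hT hy' with h | h
    · have := hx y (Finset.mem_univ y)
      omega
    · exact parent_unique hT hy' hvp (by omega) hp
  rw [IsLeaf, hset, Set.ncard_singleton]

lemma exists_support [Fintype V] [DecidableEq V] (hT : G.IsTree) (hn : 2 ≤ Fintype.card V) :
    ∃ v, IsSupport G v := by
  obtain ⟨u, hu⟩ := exists_leaf hT hn
  obtain ⟨c, hc⟩ := Set.ncard_eq_one.mp hu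
  have hadj : G.Adj u c := by
    have : c ∈ G.neighborSet u := by rw [hc]; exact Set.mem_singleton c
    exact this
  exact ⟨c, u, hadj.symm, hu⟩

lemma support_ncard_le_leaf_ncard [Fintype V] (G : SimpleGraph V) :
    {v | IsSupport G v}.ncard ≤ {v | IsLeaf G v}.ncard := by
  classical
  apply Set.ncard_le_ncard_of_injOn
    (fun w => if h : IsSupport G w then h.choose else w)
  · intro w hw
    simp only [Set.mem_setOf_eq] at hw ⊢
    rw [dif_pos hw]
    exact hw.choose_spec.2
  · intro w1 h1 w2 h2 heq
    simp only [Set.mem_setOf_eq] at h1 h2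
    dsimp only at heq
    rw [dif_pos h1, dif_pos h2] at heq
    have hl : IsLeaf G h2.choose := h2.choose_spec.2
    have e1 : G.Adj h2.choose w1 := by rw [← heq]; exact h1.choose_spec.1.symm
    have e2 : G.Adj h2.choose w2 := h2.choose_spec.1.symm
    exact leaf_unique_neighbor hl e1 e2


lemma zmod4_cases : ∀ x y : ZMod 4, x = y ∨ x = y + 1 ∨ x = y + 2 ∨ x = y + 3 := by decide

lemma main_dds [DecidableEq V] (hT : G.IsTree) {ρ : V} (hρ : IsSupport G ρ) (r : ZMod 4) :
    IsDisjDomSet G {v | ((G.dist ρ v : ZMod 4)) = r ∨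
      (IsSupport G v ∧ ((G.dist ρ v : ZMod 4) = r + 1 ∨ (G.dist ρ v : ZMod 4) = r + 2))} := by
  intro v hv
  simp only [Set.mem_setOf_eq, not_or, not_and] at hv
  obtain ⟨h0, hS⟩ := hv
  have hmem : ∀ w, ((G.dist ρ w : ZMod 4)) = r ∨
      (IsSupport G w ∧ ((G.dist ρ w : ZMod 4) = r + 1 ∨ (G.dist ρ w : ZMod 4) = r + 2)) →
      w ∈ {v | ((G.dist ρ v : ZMod 4)) = r ∨
      (IsSupport G v ∧ ((G.dist ρ v : ZMod 4) = r + 1 ∨ (G.dist ρ v : ZMod 4) = r + 2))} :=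
    fun w hw => hw
  have h4 : (4 : ZMod 4) = 0 := by decide
  have hdρ : G.dist ρ ρ = 0 := SimpleGraph.dist_self
  have fcast : ∀ a b : V, G.dist ρ a + 1 = G.dist ρ b →
      ((G.dist ρ a : ℕ) : ZMod 4) + 1 = ((G.dist ρ b : ℕ) : ZMod 4) := by
    intro a b h
    have := congrArg (fun n : ℕ => (n : ZMod 4)) h
    push_cast at this
    exact this
  rcases zmod4_cases ((G.dist ρ v : ZMod 4)) r with hc | hc | hc | hc
  · exact absurd hc h0
  · -- depth ≡ r+1 : parent is in class r, or v = ρ is itself a support (excluded)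
    have hne : v ≠ ρ := by
      rintro rfl
      exact (hS hρ).1 hc
    obtain ⟨p, hvp, hp⟩ := exists_parent hT hne
    left
    refine ⟨p, hmem p (Or.inl ?_), hvp⟩
    have := fcast p v hp
    linear_combination this + hc
  · -- depth ≡ r+2
    have hne : v ≠ ρ := by
      rintro rfl
      exact (hS hρ).2 hc
    have hvns : ¬ IsSupport G v := fun h => (hS h).2 hc
    obtain ⟨p, hvp, hp⟩ := exists_parent hT hne
    have hfp : ((G.dist ρ p : ℕ) : ZMod 4) = r + 1 := by
      have := fcast p v hp
      linear_combination this + hc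
    by_cases hleaf : IsLeaf G v
    · -- parent is a support in class r+1
      left
      exact ⟨p, hmem p (Or.inr ⟨⟨v, hvp.symm, hleaf⟩, Or.inl hfp⟩), hvp⟩
    · -- v internal, not support
      obtain ⟨c, hvc, hcp⟩ := exists_other_neighbor hvp hleaf
      have hdc : G.dist ρ c = G.dist ρ v + 1 := by
        rcases adj_dist (ρ := ρ) hT hvc with h | h
        · exact h
        · exact absurd (parent_unique (ρ := ρ) hT hvc hvp (by omega) hp) hcp
      have hcleaf : ¬ IsLeaf G c := fun h => hvns ⟨c, hvc, h⟩
      obtain ⟨x, hcx, hxv⟩ := exists_other_neighbor hvc.symm hcleaf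
      have hdx : G.dist ρ x = G.dist ρ c + 1 := by
        rcases adj_dist (ρ := ρ) hT hcx with h | h
        · exact h
        · exact absurd (parent_unique (ρ := ρ) hT hcx hvc.symm (by omega) (by omega)) hxv
      have hfx : ((G.dist ρ x : ℕ) : ZMod 4) = r := by
        have h1 := fcast c x (by omega)
        have h2 := fcast v c (by omega)
        linear_combination - h1 - h2 + hc + h4
      by_cases h1 : G.dist ρ v = 1
      · -- parent is ρ, a support in class r+1
        have hpρ : p = ρ := by
          have : G.dist ρ p = 0 := by omega
          exact ((hT.isConnected.dist_eq_zero_iff).mp this).symm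
        left
        exact ⟨p, hmem p (Or.inr ⟨hpρ ▸ hρ, Or.inl hfp⟩), hvp⟩
      · -- grandparent + "grandchild" both in class r at distance 2
        have hdv2 : 2 ≤ G.dist ρ v := by
          have : G.dist ρ v ≠ 0 := fun h => hne ((hT.isConnected.dist_eq_zero_iff).mp h).symm
          omega
        have hpρ : p ≠ ρ := by
          intro h
          rw [h, hdρ] at hp
          omega
        obtain ⟨q, hpq, hq⟩ := exists_parent hT hpρ
        have hfq : ((G.dist ρ q : ℕ) : ZMod 4) = r := by
          have ha := fcast q p hq
          have hb := fcast p v hp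
          linear_combination ha + hb + hc
        right
        refine ⟨q, hmem q (Or.inl hfq), x, hmem x (Or.inl hfx), ?_, ?_, ?_⟩
        · intro h
          rw [h] at hq
          omega
        · exact dist_two_down (ρ := ρ) hT hvp hpq (by omega)
        · exact dist_two_up (ρ := ρ) hT hvc hcx (by omega)
  · -- depth ≡ r+3
    by_cases hne : v = ρ
    · -- root: any neighbor has depth 1 ≡ r
      subst hne
      obtain ⟨u, hu, -⟩ := hρ
      have hdu : G.dist v u = 1 := by
        rcases adj_dist (ρ := v) hT hu with h | h
        · omega
        · omega
      left
      refine ⟨u, hmem u (Or.inl ?_), hu⟩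
      have := fcast v u (by omega)
      linear_combination - this + hc + h4
    · obtain ⟨p, hvp, hp⟩ := exists_parent hT hne
      have hfp : ((G.dist ρ p : ℕ) : ZMod 4) = r + 2 := by
        have := fcast p v hp
        linear_combination this + hc
      by_cases hleaf : IsLeaf G v
      · left
        exact ⟨p, hmem p (Or.inr ⟨⟨v, hvp.symm, hleaf⟩, Or.inr hfp⟩), hvp⟩
      · obtain ⟨c, hvc, hcp⟩ := exists_other_neighbor hvp hleaf
        have hdc : G.dist ρ c = G.dist ρ v + 1 := by
          rcases adj_dist (ρ := ρ) hT hvc with h | h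
          · exact h
          · exact absurd (parent_unique (ρ := ρ) hT hvc hvp (by omega) hp) hcp
        left
        refine ⟨c, hmem c (Or.inl ?_), hvc⟩
        have := fcast v c (by omega)
        linear_combination - this + hc + h4


end Aux

theorem disjDomNum_upper_bound {V : Type*} [Fintype V] (G : SimpleGraph V)
    (hT : G.IsTree) (hn : 2 ≤ Fintype.card V) :
    (disjDomNum G : ℚ) ≤
      ((Fintype.card V : ℚ) + ({v | IsLeaf G v}.ncard : ℚ) + ({v | IsSupport G v}.ncard : ℚ)) / 4 := by
  classical
  obtain ⟨ρ, hρ⟩ := exists_support hT hn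
  set f : V → ZMod 4 := fun v => ((G.dist ρ v : ℕ) : ZMod 4) with hf
  set D : ZMod 4 → Set V := fun r => {v | f v = r ∨
      (IsSupport G v ∧ (f v = r + 1 ∨ f v = r + 2))} with hD
  have hγ : ∀ r, disjDomNum G ≤ (D r).ncard := fun r =>
    Nat.sInf_le ⟨D r, main_dds hT hρ r, rfl⟩
  -- counting
  have hsub : ∀ r, (D r).ncard ≤ (Finset.univ.filter fun v => f v = r).card
      + ((Finset.univ.filter fun v => IsSupport G v ∧ f v = r + 1).card
      + (Finset.univ.filter fun v => IsSupport G v ∧ f v = r + 2).card) := by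
    intro r
    have : D r ⊆ {v | f v = r} ∪ ({v | IsSupport G v ∧ f v = r + 1}
        ∪ {v | IsSupport G v ∧ f v = r + 2}) := by
      intro v hv
      simp only [hD, Set.mem_setOf_eq, Set.mem_union] at hv ⊢
      tauto
    calc (D r).ncard ≤ ({v | f v = r} ∪ ({v | IsSupport G v ∧ f v = r + 1}
        ∪ {v | IsSupport G v ∧ f v = r + 2})).ncard :=
          Set.ncard_le_ncard this (Set.toFinite _)
      _ ≤ {v | f v = r}.ncard + ({v | IsSupport G v ∧ f v = r + 1}
          ∪ {v | IsSupport G v ∧ f v = r + 2}).ncard := Set.ncard_union_le _ _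
      _ ≤ _ := by
          gcongr
          · rw [Set.ncard_eq_toFinset_card', Set.toFinset_setOf]
          · calc _ ≤ {v | IsSupport G v ∧ f v = r + 1}.ncard
                + {v | IsSupport G v ∧ f v = r + 2}.ncard := Set.ncard_union_le _ _
              _ = _ := by
                rw [Set.ncard_eq_toFinset_card', Set.toFinset_setOf,
                  Set.ncard_eq_toFinset_card', Set.toFinset_setOf]
  have hsum1 : ∑ r : ZMod 4, (Finset.univ.filter fun v => f v = r).card = Fintype.card V := by
    rw [← Finset.card_univ]
    exact (Finset.card_eq_sum_card_fiberwise (fun x _ => Finset.mem_univ (f x))).symm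
  have hsum2 : ∀ c : ZMod 4, ∑ r : ZMod 4,
      (Finset.univ.filter fun v => IsSupport G v ∧ f v = r + c).card
      = (Finset.univ.filter fun v => IsSupport G v).card := by
    intro c
    rw [Finset.card_eq_sum_card_fiberwise
      (s := Finset.univ.filter fun v => IsSupport G v) (t := Finset.univ) (f := f)
      (fun x _ => Finset.mem_univ (f x))]
    apply Fintype.sum_equiv (Equiv.addRight c)
    intro r
    congr 1
    rw [Finset.filter_filter]
    rfl
  have hcards : ZMod 4 → ℕ := fun r => (D r).ncard
  have hkey : 4 * disjDomNum G ≤ Fintype.card V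
      + 2 * (Finset.univ.filter fun v => IsSupport G v).card := by
    have h4 : ∑ _r : ZMod 4, disjDomNum G = 4 * disjDomNum G := by
      simp [Finset.sum_const, Finset.card_univ]
    calc 4 * disjDomNum G = ∑ _r : ZMod 4, disjDomNum G := h4.symm
      _ ≤ ∑ r : ZMod 4, (D r).ncard := Finset.sum_le_sum fun r _ => hγ r
      _ ≤ ∑ r : ZMod 4, ((Finset.univ.filter fun v => f v = r).card
          + ((Finset.univ.filter fun v => IsSupport G v ∧ f v = r + 1).card
          + (Finset.univ.filter fun v => IsSupport G v ∧ f v = r + 2).card)) :=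
            Finset.sum_le_sum fun r _ => hsub r
      _ = Fintype.card V + 2 * (Finset.univ.filter fun v => IsSupport G v).card := by
          rw [Finset.sum_add_distrib, Finset.sum_add_distrib, hsum1, hsum2 1, hsum2 2]
          ring
  -- convert to the statement
  have hS : {v | IsSupport G v}.ncard = (Finset.univ.filter fun v => IsSupport G v).card := by
    rw [Set.ncard_eq_toFinset_card', Set.toFinset_setOf]
  have hsl : {v | IsSupport G v}.ncard ≤ {v | IsLeaf G v}.ncard :=
    support_ncard_le_leaf_ncard G
  rw [le_div_iff₀ (by norm_num : (0:ℚ) < 4)]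
  have hkey' : 4 * disjDomNum G ≤ Fintype.card V + {v | IsLeaf G v}.ncard
      + {v | IsSupport G v}.ncard := by
    rw [hS] at hsl ⊢
    omega
  rw [mul_comm]
  exact_mod_cast hkey'
end

section
/- If T is a nontrivial tree of order n with l leaves and s support vertices, then γ²ᵈ(T) ≤ (n + 3s − l)/4. -/
open SimpleGraph

/-!
Root the tree at a support vertex `r` and split the vertices into leaves, supports and the
remaining "inner" vertices `M`; for `n ≥ 3` no leaf is a support, so `n = l + s + |M|`
(the case `n = 2` is checked directly).
For every residue `c`, the supports together with the non-leaves at depth `≡ c (mod 4)` form a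
disjunctive dominating set: a remaining vertex at depth `≡ c + 1` or `≡ c + 3` has its parent
resp. a child in the set, and one at depth `≡ c + 2` either has a neighbour in the set or has its
grandparent and a grandchild in it, both at distance two. Choosing `c` so that at most a quarter
of `M` lies at depth `≡ c` gives `γ²ᵈ ≤ s + |M| / 4 = (n + 3s - l) / 4`.
-/

section

variable {V : Type*} {G : SimpleGraph V}

lemma IsLeaf.eq_of_adj {v u w : V} (hv : IsLeaf G v) (hu : G.Adj v u) (hw : G.Adj v w) :
    w = u := by
  obtain ⟨a, ha⟩ := Set.ncard_eq_one.mp hv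
  have hu' : u ∈ G.neighborSet v := hu
  have hw' : w ∈ G.neighborSet v := hw
  rw [ha] at hu' hw'
  exact hw'.trans hu'.symm

lemma isLeaf_of_forall_adj_eq {v u : V} (hu : G.Adj v u) (h : ∀ w, G.Adj v w → w = u) :
    IsLeaf G v := by
  have : G.neighborSet v = {u} := Set.ext fun w => ⟨h w, fun hw => hw ▸ hu⟩
  rw [IsLeaf, this, Set.ncard_singleton]

lemma exists_adj_ne_of_not_isLeaf {v u : V} (hv : ¬IsLeaf G v) (hu : G.Adj v u) :
    ∃ w, G.Adj v w ∧ w ≠ u := by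
  by_contra! h
  exact hv (isLeaf_of_forall_adj_eq hu h)

lemma isLeaf_iff_degree_eq_one {v : V} [Fintype (G.neighborSet v)] :
    IsLeaf G v ↔ G.degree v = 1 := by
  rw [IsLeaf, Set.ncard_eq_toFinset_card', ← neighborFinset_def, card_neighborFinset_eq_degree]

lemma disjDomNum_le_ncard {D : Set V} (hD : IsDisjDomSet G D) : disjDomNum G ≤ D.ncard :=
  Nat.sInf_le ⟨D, hD, rfl⟩

lemma SimpleGraph.Preconnected.eq_or_eq_of_isLeaf_of_isLeaf (hG : G.Preconnected) {u v : V}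
    (huv : G.Adj u v) (hu : IsLeaf G u) (hv : IsLeaf G v) (w : V) : w = u ∨ w = v := by
  by_contra! hw
  obtain ⟨p⟩ := hG u w
  obtain ⟨d, -, hd, hd'⟩ := p.exists_boundary_dart {u, v} (by simp) (by simp [hw.1, hw.2])
  rcases hd with h | h
  · exact hd' (Or.inr (hu.eq_of_adj huv (h ▸ d.adj)))
  · exact hd' (Or.inl (hv.eq_of_adj huv.symm (h ▸ d.adj)))

lemma disjoint_isLeaf_isSupport [Fintype V] (hG : G.Preconnected) (h3 : 2 < Fintype.card V) :
    Disjoint {v | IsLeaf G v} {v | IsSupport G v} := by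
  classical
  refine Set.disjoint_left.mpr fun v hv ⟨u, hvu, hu⟩ => ?_
  have hsub : (Finset.univ : Finset V) ⊆ {v, u} := fun w _ => by
    simpa using hG.eq_or_eq_of_isLeaf_of_isLeaf hvu hv hu w
  have := (Finset.card_le_card hsub).trans Finset.card_le_two
  rw [Finset.card_univ] at this
  omega

lemma four_mul_disjDomNum_add_le_of_card_eq_two [Fintype V] (hG : G.Preconnected)
    (h2 : Fintype.card V = 2) :
    4 * disjDomNum G + {v | IsLeaf G v}.ncard ≤ Fintype.card V + 3 * {v | IsSupport G v}.ncard := by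
  have hother : ∀ v, ∃! u, u ≠ v := fun v =>
    (Nat.card_eq_two_iff' v).mp (Nat.card_eq_fintype_card.trans h2)
  have : Nontrivial V := Fintype.one_lt_card_iff_nontrivial.mp (by omega)
  have hadj : ∀ v w, w ≠ v → G.Adj v w := fun v w hwv => by
    obtain ⟨u, hu⟩ := hG.exists_adj_of_nontrivial v
    exact (hother v).unique hu.ne' hwv ▸ hu
  have hleaf : ∀ v, IsLeaf G v := fun v => by
    obtain ⟨u, hu⟩ := hG.exists_adj_of_nontrivial v
    exact isLeaf_of_forall_adj_eq hu fun w hw => (hother v).unique hw.ne' hu.ne'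
  obtain ⟨v⟩ := (inferInstance : Nonempty V)
  have hγ : disjDomNum G ≤ 1 := by
    refine (disjDomNum_le_ncard (D := {v}) fun w hw => Or.inl ⟨v, rfl, ?_⟩).trans
      (Set.ncard_singleton v).le
    exact (hadj v w hw).symm
  have hL : {v | IsLeaf G v} = Set.univ := Set.eq_univ_of_forall hleaf
  have hS : {v | IsSupport G v} = Set.univ :=
    Set.eq_univ_of_forall fun v => (hG.exists_adj_of_nontrivial v).imp fun u hu => ⟨hu, hleaf u⟩
  rw [hL, hS, Set.ncard_univ, Nat.card_eq_fintype_card]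
  omega

lemma Set.Finite.exists_mul_ncard_fiber_mod_le {α : Type*} {s : Set α} (hs : s.Finite)
    (f : α → ℕ) {k : ℕ} (hk : 0 < k) : ∃ c < k, k * {x ∈ s | f x % k = c}.ncard ≤ s.ncard := by
  classical
  obtain ⟨c, hc, hle⟩ := Finset.exists_card_fiber_le_of_card_le_nsmul (s := hs.toFinset)
    (t := Finset.range k) (f := fun x => f x % k) (b := (s.ncard : ℚ) / k) ⟨0, by simpa⟩ (by
      rw [Finset.card_range, nsmul_eq_mul, mul_div_cancel₀ _ (by positivity),
        Set.ncard_eq_toFinset_card s hs])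
  refine ⟨c, Finset.mem_range.mp hc, ?_⟩
  have hfib : {x ∈ s | f x % k = c} = ↑(hs.toFinset.filter fun x => f x % k = c) := by
    ext; simp
  rw [hfib, Set.ncard_coe_finset]
  rw [le_div_iff₀ (by positivity)] at hle
  exact_mod_cast (mul_comm _ _).trans_le hle

namespace SimpleGraph.IsTree

lemma length_eq_dist_of_isPath (hT : G.IsTree) {u v : V} {p : G.Walk u v} (hp : p.IsPath) :
    p.length = G.dist u v := by
  obtain ⟨q, hq, hql⟩ := hT.connected.exists_path_of_dist u v
  rw [(hT.existsUnique_path u v).unique hp hq, hql]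

lemma dist_eq_two (hT : G.IsTree) {u v w : V} (huv : G.Adj u v) (hvw : G.Adj v w) (huw : u ≠ w) :
    G.dist u w = 2 := by
  have hp : (Walk.cons huv (Walk.cons hvw Walk.nil)).IsPath := by
    simp [Walk.cons_isPath_iff, huv.ne, hvw.ne, huw]
  exact (hT.length_eq_dist_of_isPath hp).symm

lemma dist_eq_add_one_or_of_adj (hT : G.IsTree) (r : V) {u v : V} (h : G.Adj u v) :
    G.dist r v = G.dist r u + 1 ∨ G.dist r u = G.dist r v + 1 := by
  classical
  obtain ⟨P, hP, hPl⟩ := hT.connected.exists_path_of_dist r u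
  by_cases hv : v ∈ P.support
  · have hlen := congrArg Walk.length (P.take_spec hv)
    rw [Walk.length_append, hT.length_eq_dist_of_isPath (hP.takeUntil hv),
      hT.length_eq_dist_of_isPath (hP.dropUntil hv), dist_eq_one_iff_adj.mpr h.symm] at hlen
    omega
  · left
    rw [← hT.length_eq_dist_of_isPath (hP.concat hv h), Walk.length_concat, hPl]

lemma exists_parent (hT : G.IsTree) {r v : V} (hv : v ≠ r) :
    ∃ p, G.Adj v p ∧ G.dist r p + 1 = G.dist r v := by
  obtain ⟨q, hq, hql⟩ := hT.connected.exists_path_of_dist v r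
  cases q with
  | nil => exact absurd rfl hv
  | @cons _ p _ hvp q' =>
    refine ⟨p, hvp, ?_⟩
    rw [dist_comm, ← hT.length_eq_dist_of_isPath hq.of_cons, dist_comm, ← hql, Walk.length_cons]

lemma eq_of_parent (hT : G.IsTree) {r v p₁ p₂ : V} (h₁ : G.Adj v p₁) (h₂ : G.Adj v p₂)
    (hd₁ : G.dist r p₁ + 1 = G.dist r v) (hd₂ : G.dist r p₂ + 1 = G.dist r v) : p₁ = p₂ := by
  classical
  -- each parent is the penultimate vertex of a path from `r` to `v`, and that path is unique
  have hpath : ∀ p, G.Adj v p → G.dist r p + 1 = G.dist r v →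
      ∃ W : G.Walk r v, W.IsPath ∧ W.penultimate = p := by
    intro p hp hd
    obtain ⟨P, hP, hPl⟩ := hT.connected.exists_path_of_dist r p
    have hvP : v ∉ P.support := fun hv => by
      have := (dist_le (P.takeUntil v hv)).trans (P.length_takeUntil_le_length hv)
      omega
    exact ⟨P.concat hp.symm, hP.concat hvP hp.symm, Walk.penultimate_concat _ _⟩
  obtain ⟨W₁, hW₁, rfl⟩ := hpath p₁ h₁ hd₁
  obtain ⟨W₂, hW₂, rfl⟩ := hpath p₂ h₂ hd₂
  rw [(hT.existsUnique_path r v).unique hW₁ hW₂]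

lemma exists_child [Nontrivial V] (hT : G.IsTree) (r : V) {v : V} (hv : ¬IsLeaf G v) :
    ∃ w, G.Adj v w ∧ G.dist r w = G.dist r v + 1 := by
  obtain ⟨u, hu⟩ := hT.connected.preconnected.exists_adj_of_nontrivial v
  obtain ⟨w, hw, hwu⟩ := exists_adj_ne_of_not_isLeaf hv hu
  rcases hT.dist_eq_add_one_or_of_adj r hu with h | h
  · exact ⟨u, hu, h⟩
  rcases hT.dist_eq_add_one_or_of_adj r hw with h' | h'
  · exact ⟨w, hw, h'⟩
  exact absurd (hT.eq_of_parent hw hu h'.symm h.symm) hwu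

lemma not_isLeaf_of_adj_child (hT : G.IsTree) {r v w : V} (hv : v ≠ r) (hw : G.Adj v w)
    (hd : G.dist r w = G.dist r v + 1) : ¬IsLeaf G v := fun hl => by
  obtain ⟨p, hp, hpd⟩ := hT.exists_parent hv
  rw [hl.eq_of_adj hp hw] at hd
  omega

lemma exists_isSupport [Fintype V] [Nontrivial V] (hT : G.IsTree) : ∃ r, IsSupport G r := by
  classical
  obtain ⟨v, hv⟩ := hT.exists_vert_degree_one_of_nontrivial
  obtain ⟨u, hu⟩ := hT.connected.preconnected.exists_adj_of_nontrivial v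
  exact ⟨u, v, hu.symm, isLeaf_iff_degree_eq_one.mpr hv⟩

lemma isDisjDomSet_supports_union_depth_mod_four [Nontrivial V] (hT : G.IsTree) {r : V}
    (hr : IsSupport G r) (c : ℕ) :
    IsDisjDomSet G ({v | IsSupport G v} ∪ {v | ¬IsLeaf G v ∧ G.dist r v % 4 = c % 4}) := by
  set D := {v | IsSupport G v} ∪ {v | ¬IsLeaf G v ∧ G.dist r v % 4 = c % 4}
  have mem_of_child : ∀ {u w}, G.Adj u w → G.dist r w = G.dist r u + 1 →
      G.dist r u % 4 = c % 4 → u ∈ D := by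
    intro u w huw hd hc
    by_cases hur : u = r
    · exact Or.inl (hur ▸ hr)
    · exact Or.inr ⟨hT.not_isLeaf_of_adj_child hur huw hd, hc⟩
  intro v hvD
  have hvS : ¬IsSupport G v := fun h => hvD (Or.inl h)
  obtain ⟨p, hvp, hpd⟩ := hT.exists_parent fun h : v = r => hvS (h ▸ hr)
  by_cases hvL : IsLeaf G v
  · exact Or.inl ⟨p, Or.inl ⟨v, hvp.symm, hvL⟩, hvp⟩
  have hvc : G.dist r v % 4 ≠ c % 4 := fun h => hvD (Or.inr ⟨hvL, h⟩)
  obtain ⟨w, hvw, hwd⟩ := hT.exists_child r hvL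
  have hwL : ¬IsLeaf G w := fun h => hvS ⟨w, hvw, h⟩
  obtain ⟨x, hwx, hxd⟩ := hT.exists_child r hwL
  rcases (by omega : G.dist r v % 4 = (c + 1) % 4 ∨ G.dist r v % 4 = (c + 2) % 4 ∨
      G.dist r v % 4 = (c + 3) % 4) with hc | hc | hc
  · exact Or.inl ⟨p, mem_of_child hvp.symm hpd.symm (by omega), hvp⟩
  · by_cases hnb : ∃ u ∈ D, G.Adj v u
    · exact Or.inl hnb
    push Not at hnb
    obtain ⟨g, hpg, hgd⟩ := hT.exists_parent fun h : p = r => hnb p (Or.inl (h ▸ hr)) hvp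
    have hxL : ¬IsLeaf G x := fun h => hnb w (Or.inl ⟨x, hwx, h⟩) hvw
    obtain ⟨y, hxy, hyd⟩ := hT.exists_child r hxL
    refine Or.inr ⟨g, mem_of_child hpg.symm hgd.symm (by omega), x,
      mem_of_child hxy hyd (by omega), ?_, hT.dist_eq_two hvp hpg ?_, hT.dist_eq_two hvw hwx ?_⟩ <;>
    · rintro rfl
      omega
  · exact Or.inl ⟨w, mem_of_child hwx hxd (by omega), hvw⟩

lemma four_mul_disjDomNum_add_le [Fintype V] (hT : G.IsTree) (h3 : 2 < Fintype.card V) :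
    4 * disjDomNum G + {v | IsLeaf G v}.ncard ≤ Fintype.card V + 3 * {v | IsSupport G v}.ncard := by
  have : Nontrivial V := Fintype.one_lt_card_iff_nontrivial.mp (by omega)
  set L := {v | IsLeaf G v}
  set S := {v | IsSupport G v}
  obtain ⟨r, hr⟩ := hT.exists_isSupport
  obtain ⟨c, hc4, hc⟩ := (L ∪ S)ᶜ.toFinite.exists_mul_ncard_fiber_mod_le (G.dist r) four_pos
  have hsub : S ∪ {v | ¬IsLeaf G v ∧ G.dist r v % 4 = c % 4} ⊆
      S ∪ {v ∈ (L ∪ S)ᶜ | G.dist r v % 4 = c} := by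
    rintro v (hv | ⟨hvL, hvc⟩)
    · exact Or.inl hv
    by_cases hvS : IsSupport G v
    · exact Or.inl hvS
    · exact Or.inr ⟨by simp [L, S, hvL, hvS], by omega⟩
  have hγ := (disjDomNum_le_ncard (hT.isDisjDomSet_supports_union_depth_mod_four hr c)).trans
    ((Set.ncard_le_ncard hsub).trans (Set.ncard_union_le _ _))
  have hLS : (L ∪ S).ncard = L.ncard + S.ncard :=
    Set.ncard_union_eq (disjoint_isLeaf_isSupport hT.connected.preconnected h3)
  have hn := Set.ncard_add_ncard_compl (L ∪ S)
  rw [Nat.card_eq_fintype_card] at hn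
  omega

end SimpleGraph.IsTree

end

theorem disjDomNum_upper_bound' {V : Type*} [Fintype V] (G : SimpleGraph V)
    (hT : G.IsTree) (hn : 2 ≤ Fintype.card V) :
    (disjDomNum G : ℚ) ≤
      ((Fintype.card V : ℚ) + 3 * ({v | IsSupport G v}.ncard : ℚ) - ({v | IsLeaf G v}.ncard : ℚ)) / 4 := by
  have key : 4 * disjDomNum G + {v | IsLeaf G v}.ncard ≤
      Fintype.card V + 3 * {v | IsSupport G v}.ncard := by
    rcases hn.eq_or_lt with h2 | h3
    · exact four_mul_disjDomNum_add_le_of_card_eq_two hT.connected.preconnected h2.symm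
    · exact hT.four_mul_disjDomNum_add_le h3
  rw [le_div_iff₀ four_pos]
  have hq : ((4 * disjDomNum G + {v | IsLeaf G v}.ncard : ℕ) : ℚ) ≤
      ((Fintype.card V + 3 * {v | IsSupport G v}.ncard : ℕ) : ℚ) := Nat.cast_le.mpr key
  push_cast at hq
  linarith
end

section
/- Let T be a tree of order at least 3 and let u be a support vertex of T with at least two leaf-neighbors. Let T′ be obtained from T by deleting one leaf-neighbor of u. Then γ²ᵈ(T) ≤ γ²ᵈ(T′) and γ²ᵈ(T′) ≤ γ²ᵈ(T), i.e., γ²ᵈ(T) = γ²ᵈ(T′). -/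
open SimpleGraph

lemma dist_eq_two_iff' {V : Type*} (G : SimpleGraph V) {v w : V} :
    G.dist v w = 2 ↔ v ≠ w ∧ ¬G.Adj v w ∧ ∃ a, G.Adj v a ∧ G.Adj a w := by
  constructor
  · intro h
    obtain ⟨p, hp⟩ := SimpleGraph.exists_walk_of_dist_ne_zero (by omega : G.dist v w ≠ 0)
    rw [h] at hp
    refine ⟨?_, ?_, p.getVert 1, ?_, ?_⟩
    · rintro rfl; simp [SimpleGraph.dist_self] at h
    · intro hadj
      have := SimpleGraph.dist_le (SimpleGraph.Walk.cons hadj SimpleGraph.Walk.nil)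
      simp at this; omega
    · have := p.adj_getVert_succ (i := 0) (by omega)
      simpa [SimpleGraph.Walk.getVert_zero] using this
    · have := p.adj_getVert_succ (i := 1) (by omega)
      rw [show (1:ℕ)+1 = p.length from by omega] at this
      simpa [SimpleGraph.Walk.getVert_length] using this
  · rintro ⟨hne, hnadj, a, h1, h2⟩
    have hle := SimpleGraph.dist_le
      (SimpleGraph.Walk.cons h1 (SimpleGraph.Walk.cons h2 SimpleGraph.Walk.nil))
    simp at hle
    have h0 : G.dist v w ≠ 0 := by
      rw [SimpleGraph.dist_ne_zero_iff_ne_and_reachable]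
      exact ⟨hne, ⟨SimpleGraph.Walk.cons h1 (SimpleGraph.Walk.cons h2 SimpleGraph.Walk.nil)⟩⟩
    have h1' : G.dist v w ≠ 1 := by
      rw [ne_eq, SimpleGraph.dist_eq_one_iff_adj]; exact hnadj
    omega

lemma leaf_nbr_unique {V : Type*} {G : SimpleGraph V} {x u : V}
    (hx : IsLeaf G x) (hu : G.Adj u x) : ∀ v, G.Adj v x → v = u := by
  intro v hv
  obtain ⟨a, ha⟩ := Set.ncard_eq_one.mp hx
  have h1 : u ∈ G.neighborSet x := hu.symm
  have h2 : v ∈ G.neighborSet x := hv.symm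
  rw [ha] at h1 h2
  simp at h1 h2; rw [h1, h2]

lemma univ_isDisjDomSet {V : Type*} (G : SimpleGraph V) :
    IsDisjDomSet G Set.univ := fun v hv => absurd (Set.mem_univ v) hv

theorem disjDomNum_delete_extra_leaf {V : Type*} [Fintype V] (G : SimpleGraph V)
    (hT : G.IsTree) (hn : 3 ≤ Fintype.card V) (u x : V)
    (hadj : G.Adj u x) (hx : IsLeaf G x)
    (hy : ∃ y, y ≠ x ∧ G.Adj u y ∧ IsLeaf G y) :
    disjDomNum G ≤ disjDomNum (G.induce {v | v ≠ x}) ∧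
    disjDomNum (G.induce {v | v ≠ x}) ≤ disjDomNum G := by
  classical
  obtain ⟨y, hyx, hadjy, hyleaf⟩ := hy
  set S : Set V := {v | v ≠ x} with hS
  set G' : SimpleGraph S := G.induce S with hG'
  have hnbx : ∀ v, G.Adj v x → v = u := leaf_nbr_unique hx hadj
  have hnby : ∀ v, G.Adj v y → v = u := leaf_nbr_unique hyleaf hadjy
  have hux : u ≠ x := hadj.ne
  have hadj' : ∀ a b : S, G'.Adj a b ↔ G.Adj ↑a ↑b := by
    intro a b; simp [hG', comap_adj]
  -- transfer of distance-2 statements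
  have hd2 : ∀ a b : S, G'.dist a b = 2 ↔ G.dist ↑a ↑b = 2 := by
    intro a b
    rw [dist_eq_two_iff', dist_eq_two_iff']
    constructor
    · rintro ⟨hne, hnadj, ⟨c, hc⟩, h1, h2⟩
      refine ⟨fun h => hne (Subtype.ext h), fun h => hnadj ((hadj' a b).mpr h), c,
        (hadj' a ⟨c, hc⟩).mp h1, (hadj' ⟨c, hc⟩ b).mp h2⟩
    · rintro ⟨hne, hnadj, c, h1, h2⟩
      have hcx : c ≠ x := by
        rintro rfl
        have ha : (a : V) = u := hnbx _ h1
        have hb : (b : V) = u := hnbx _ h2.symm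
        exact hne (ha.trans hb.symm)
      refine ⟨fun h => hne (congrArg Subtype.val h), fun h => hnadj ((hadj' a b).mp h),
        ⟨c, hcx⟩, (hadj' a ⟨c, hcx⟩).mpr h1, (hadj' ⟨c, hcx⟩ b).mpr h2⟩
  have hGne : {n | ∃ D : Set V, IsDisjDomSet G D ∧ D.ncard = n}.Nonempty :=
    ⟨_, Set.univ, univ_isDisjDomSet G, rfl⟩
  have hG'ne : {n | ∃ D : Set S, IsDisjDomSet G' D ∧ D.ncard = n}.Nonempty :=
    ⟨_, Set.univ, univ_isDisjDomSet G', rfl⟩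
  constructor
  · -- γ(G) ≤ γ(G')
    obtain ⟨D', hD', hcard⟩ := Nat.sInf_mem hG'ne
    have hval : disjDomNum G' = D'.ncard := hcard.symm
    set E : Set V := Subtype.val '' D' with hE
    have hEcard : E.ncard = D'.ncard := Set.ncard_image_of_injective _ Subtype.val_injective
    have hmemE : ∀ (v : V) (hv : v ≠ x), v ∈ E ↔ (⟨v, hv⟩ : S) ∈ D' := by
      intro v hv
      constructor
      · rintro ⟨⟨a, ha⟩, h1, rfl⟩; exact h1
      · intro h; exact ⟨⟨v, hv⟩, h, rfl⟩
    -- common transfer: domination of a vertex ≠ x by E in G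
    have transfer : ∀ (v : V) (hvx : v ≠ x), (⟨v, hvx⟩ : S) ∉ D' →
        (∃ w ∈ E, G.Adj v w) ∨
        (∃ w₁ ∈ E, ∃ w₂ ∈ E, w₁ ≠ w₂ ∧ G.dist v w₁ = 2 ∧ G.dist v w₂ = 2) := by
      intro v hvx hvD
      rcases hD' _ hvD with ⟨w, hw, hadjw⟩ | ⟨w₁, hw₁, w₂, hw₂, hne, hd₁, hd₂⟩
      · exact Or.inl ⟨↑w, ⟨w, hw, rfl⟩, (hadj' _ _).mp hadjw⟩
      · exact Or.inr ⟨↑w₁, ⟨w₁, hw₁, rfl⟩, ↑w₂, ⟨w₂, hw₂, rfl⟩,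
          fun h => hne (Subtype.ext h), (hd2 _ _).mp hd₁, (hd2 _ _).mp hd₂⟩
    by_cases huE : u ∈ E
    · -- case A : D = E
      have hDom : IsDisjDomSet G E := by
        intro v hv
        by_cases hvx : v = x
        · rw [hvx]; exact Or.inl ⟨u, huE, hadj.symm⟩
        · exact transfer v hvx (fun h => hv ((hmemE v hvx).mpr h))
      rw [hval, ← hEcard]
      exact Nat.sInf_le ⟨E, hDom, rfl⟩
    · by_cases hyE : y ∈ E
      · -- case C : D = insert u (E \ {y})
        set D : Set V := insert u (E \ {y}) with hD
        have hDcard : D.ncard ≤ E.ncard := by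
          have h1 : (E \ {y}).ncard = E.ncard - 1 := Set.ncard_diff_singleton_of_mem hyE
          have h2 : D.ncard ≤ (E \ {y}).ncard + 1 := Set.ncard_insert_le _ _
          have h3 : 0 < E.ncard := (Set.ncard_pos (Set.toFinite _)).mpr ⟨y, hyE⟩
          omega
        have hDom : IsDisjDomSet G D := by
          intro v hv
          have hvu : v ≠ u := fun h => hv (by rw [h]; exact Set.mem_insert u _)
          by_cases hvx : v = x
          · rw [hvx]; exact Or.inl ⟨u, Set.mem_insert u _, hadj.symm⟩
          by_cases hvy : v = y
          · rw [hvy]; exact Or.inl ⟨u, Set.mem_insert u _, hadjy.symm⟩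
          have hvE : v ∉ E := by
            intro h; exact hv (Set.mem_insert_of_mem _ ⟨h, hvy⟩)
          rcases transfer v hvx (fun h => hvE ((hmemE v hvx).mpr h)) with
            ⟨w, hw, hadjw⟩ | ⟨w₁, hw₁, w₂, hw₂, hne, hd₁, hd₂⟩
          · have hwy : w ≠ y := by
              rintro rfl; exact hvu (hnby v hadjw)
            exact Or.inl ⟨w, Set.mem_insert_of_mem _ ⟨hw, hwy⟩, hadjw⟩
          · by_cases h1y : w₁ = y
            · rw [h1y] at hd₁
              obtain ⟨-, -, c, hc1, hc2⟩ := (dist_eq_two_iff' G).mp hd₁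
              rw [hnby c hc2] at hc1
              exact Or.inl ⟨u, Set.mem_insert u _, hc1⟩
            by_cases h2y : w₂ = y
            · rw [h2y] at hd₂
              obtain ⟨-, -, c, hc1, hc2⟩ := (dist_eq_two_iff' G).mp hd₂
              rw [hnby c hc2] at hc1
              exact Or.inl ⟨u, Set.mem_insert u _, hc1⟩
            · exact Or.inr ⟨w₁, Set.mem_insert_of_mem _ ⟨hw₁, h1y⟩,
                w₂, Set.mem_insert_of_mem _ ⟨hw₂, h2y⟩, hne, hd₁, hd₂⟩
        rw [hval, ← hEcard]
        exact le_trans (Nat.sInf_le ⟨D, hDom, rfl⟩) hDcard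
      · -- case B : u ∉ E, y ∉ E, D = E
        have hDom : IsDisjDomSet G E := by
          intro v hv
          by_cases hvx : v = x
          · rw [hvx]
            -- use the domination of y in G'
            have hyD' : (⟨y, hyx⟩ : S) ∉ D' := fun h => hyE ((hmemE y hyx).mpr h)
            rcases hD' _ hyD' with ⟨w, hw, hadjw⟩ | ⟨w₁, hw₁, w₂, hw₂, hne, hd₁, hd₂⟩
            · exfalso
              have hwu : (w : V) = u := hnby _ ((hadj' _ _).mp hadjw).symm
              exact huE (by rw [← hwu]; exact ⟨w, hw, rfl⟩)
            · right
              have key : ∀ w : S, w ∈ D' → G'.dist ⟨y, hyx⟩ w = 2 → G.dist x ↑w = 2 := by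
                intro w hw hd
                have hd' : G.dist y ↑w = 2 := (hd2 _ _).mp hd
                obtain ⟨-, -, c, hc1, hc2⟩ := (dist_eq_two_iff' G).mp hd'
                have hcu : c = u := hnby c hc1.symm
                rw [hcu] at hc2
                rw [dist_eq_two_iff']
                refine ⟨fun h => w.prop h.symm, ?_, u, hadj.symm, hc2⟩
                intro hadjvw
                have hwu : (w : V) = u := hnbx _ hadjvw.symm
                exact huE (by rw [← hwu]; exact ⟨w, hw, rfl⟩)
              exact ⟨↑w₁, ⟨w₁, hw₁, rfl⟩, ↑w₂, ⟨w₂, hw₂, rfl⟩,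
                fun h => hne (Subtype.ext h), key w₁ hw₁ hd₁, key w₂ hw₂ hd₂⟩
          · exact transfer v hvx (fun h => hv ((hmemE v hvx).mpr h))
        rw [hval, ← hEcard]
        exact Nat.sInf_le ⟨E, hDom, rfl⟩
  · -- γ(G') ≤ γ(G)
    obtain ⟨D, hD, hcard⟩ := Nat.sInf_mem hGne
    have hval : disjDomNum G = D.ncard := hcard.symm
    -- first replace x by u if needed
    obtain ⟨D₂, hD₂, hD₂card, hxD₂⟩ :
        ∃ D₂ : Set V, IsDisjDomSet G D₂ ∧ D₂.ncard ≤ D.ncard ∧ x ∉ D₂ := by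
      by_cases hxD : x ∈ D
      · refine ⟨insert u (D \ {x}), ?_, ?_, ?_⟩
        · intro v hv
          have hvu : v ≠ u := fun h => hv (by rw [h]; exact Set.mem_insert u _)
          by_cases hvx : v = x
          · rw [hvx]; exact Or.inl ⟨u, Set.mem_insert u _, hadj.symm⟩
          have hvD : v ∉ D := fun h => hv (Set.mem_insert_of_mem _ ⟨h, hvx⟩)
          rcases hD v hvD with ⟨w, hw, hadjw⟩ | ⟨w₁, hw₁, w₂, hw₂, hne, hd₁, hd₂⟩
          · have hwx : w ≠ x := by rintro rfl; exact hvu (hnbx v hadjw)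
            exact Or.inl ⟨w, Set.mem_insert_of_mem _ ⟨hw, hwx⟩, hadjw⟩
          · by_cases h1x : w₁ = x
            · rw [h1x] at hd₁
              obtain ⟨-, -, c, hc1, hc2⟩ := (dist_eq_two_iff' G).mp hd₁
              rw [hnbx c hc2] at hc1
              exact Or.inl ⟨u, Set.mem_insert u _, hc1⟩
            by_cases h2x : w₂ = x
            · rw [h2x] at hd₂
              obtain ⟨-, -, c, hc1, hc2⟩ := (dist_eq_two_iff' G).mp hd₂
              rw [hnbx c hc2] at hc1
              exact Or.inl ⟨u, Set.mem_insert u _, hc1⟩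
            · exact Or.inr ⟨w₁, Set.mem_insert_of_mem _ ⟨hw₁, h1x⟩,
                w₂, Set.mem_insert_of_mem _ ⟨hw₂, h2x⟩, hne, hd₁, hd₂⟩
        · have h1 : (D \ {x}).ncard = D.ncard - 1 := Set.ncard_diff_singleton_of_mem hxD
          have h2 : (insert u (D \ {x})).ncard ≤ (D \ {x}).ncard + 1 := Set.ncard_insert_le _ _
          have h3 : 0 < D.ncard := (Set.ncard_pos (Set.toFinite _)).mpr ⟨x, hxD⟩
          omega
        · intro h
          rcases h with h | ⟨-, h⟩
          · exact hux h.symm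
          · exact h rfl
      · exact ⟨D, hD, le_refl _, hxD⟩
    set D' : Set S := Subtype.val ⁻¹' D₂ with hD'def
    have himg : Subtype.val '' D' = D₂ := by
      ext v
      constructor
      · rintro ⟨⟨a, ha⟩, h1, rfl⟩; exact h1
      · intro h
        have hvx : v ≠ x := fun heq => hxD₂ (heq ▸ h)
        exact ⟨⟨v, hvx⟩, h, rfl⟩
    have hD'card : D'.ncard = D₂.ncard := by
      rw [← himg, Set.ncard_image_of_injective _ Subtype.val_injective]
    have hDom' : IsDisjDomSet G' D' := by
      rintro ⟨v, hvx⟩ hvD'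
      have hvD₂ : v ∉ D₂ := hvD'
      rcases hD₂ v hvD₂ with ⟨w, hw, hadjw⟩ | ⟨w₁, hw₁, w₂, hw₂, hne, hd₁, hd₂⟩
      · have hwx : w ≠ x := fun heq => hxD₂ (heq ▸ hw)
        exact Or.inl ⟨⟨w, hwx⟩, hw, (hadj' _ _).mpr hadjw⟩
      · have h1x : w₁ ≠ x := fun heq => hxD₂ (heq ▸ hw₁)
        have h2x : w₂ ≠ x := fun heq => hxD₂ (heq ▸ hw₂)
        exact Or.inr ⟨⟨w₁, h1x⟩, hw₁, ⟨w₂, h2x⟩, hw₂,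
          fun h => hne (congrArg Subtype.val h),
          (hd2 _ _).mpr hd₁, (hd2 _ _).mpr hd₂⟩
    rw [hval]
    calc disjDomNum G' ≤ D'.ncard := Nat.sInf_le ⟨D', hDom', rfl⟩
      _ = D₂.ncard := hD'card
      _ ≤ D.ncard := hD₂card
end

section
/- For the path P_n on n vertices with n ≥ 2, the lower bound γ²ᵈ(P_n) ≥ (n + 1)/4 holds. -/
open SimpleGraph

/-- In a path graph, distance two means the values differ by two. -/
lemma path_dist_two {n : ℕ} {v w : Fin n} (h : (pathGraph n).dist v w = 2) :
    (w : ℕ) = (v : ℕ) + 2 ∨ (v : ℕ) = (w : ℕ) + 2 := by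
  have h0 : (pathGraph n).dist v w ≠ 0 := by omega
  obtain ⟨p, hp⟩ := SimpleGraph.exists_walk_of_dist_ne_zero h0
  rw [h] at hp
  have hvw : v ≠ w := by
    intro he
    subst he
    rw [SimpleGraph.dist_self] at h
    omega
  cases p with
  | nil => simp at hp
  | cons ha q =>
    cases q with
    | nil => simp at hp
    | cons hb r =>
      cases r with
      | nil =>
        rw [pathGraph_adj] at ha hb
        have : (v : ℕ) ≠ (w : ℕ) := fun he => hvw (Fin.ext he)
        omega
      | cons hc s => simp at hp

open Classical in
/-- The charging function. -/
noncomputable def phiFun {n : ℕ} (D : Set (Fin n))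
    (h3 : ∀ v, v ∉ D → ¬(∃ u ∈ D, (pathGraph n).Adj v u) →
      ∃ w ∈ D, (w : ℕ) = (v : ℕ) + 2) : Fin n → Fin n × Fin 4 := fun v =>
  if hv : v ∈ D then (v, 1)
  else if ha : ∃ u ∈ D, (pathGraph n).Adj v u then
    if (v : ℕ) + 1 = (ha.choose : ℕ) then (ha.choose, 0) else (ha.choose, 2)
  else ((h3 v hv ha).choose, 3)

lemma phiFun_spec {n : ℕ} (D : Set (Fin n))
    (h3 : ∀ v, v ∉ D → ¬(∃ u ∈ D, (pathGraph n).Adj v u) →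
      ∃ w ∈ D, (w : ℕ) = (v : ℕ) + 2) (v : Fin n) :
    (phiFun D h3 v).1 ∈ D ∧
      (((phiFun D h3 v).2 = 1 ∧ ((phiFun D h3 v).1 : ℕ) = (v : ℕ)) ∨
       ((phiFun D h3 v).2 = 0 ∧ (v : ℕ) + 1 = ((phiFun D h3 v).1 : ℕ)) ∨
       ((phiFun D h3 v).2 = 2 ∧ ((phiFun D h3 v).1 : ℕ) + 1 = (v : ℕ)) ∨
       ((phiFun D h3 v).2 = 3 ∧ ((phiFun D h3 v).1 : ℕ) = (v : ℕ) + 2)) := by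
  unfold phiFun
  split_ifs with hv ha hlt
  · exact ⟨hv, Or.inl ⟨rfl, rfl⟩⟩
  · exact ⟨ha.choose_spec.1, Or.inr (Or.inl ⟨rfl, hlt⟩)⟩
  · refine ⟨ha.choose_spec.1, Or.inr (Or.inr (Or.inl ⟨rfl, ?_⟩))⟩
    have hadj := ha.choose_spec.2
    rw [pathGraph_adj] at hadj
    show (ha.choose : ℕ) + 1 = (v : ℕ)
    omega
  · exact ⟨(h3 v hv ha).choose_spec.1, Or.inr (Or.inr (Or.inr ⟨rfl, (h3 v hv ha).choose_spec.2⟩))⟩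

lemma phiFun_injective {n : ℕ} (D : Set (Fin n))
    (h3 : ∀ v, v ∉ D → ¬(∃ u ∈ D, (pathGraph n).Adj v u) →
      ∃ w ∈ D, (w : ℕ) = (v : ℕ) + 2) : Function.Injective (phiFun D h3) := by
  intro a b hab
  obtain ⟨-, hA⟩ := phiFun_spec D h3 a
  obtain ⟨-, hB⟩ := phiFun_spec D h3 b
  rw [hab] at hA
  rcases hA with ⟨h1, h2⟩ | ⟨h1, h2⟩ | ⟨h1, h2⟩ | ⟨h1, h2⟩ <;>
    rcases hB with ⟨g1, g2⟩ | ⟨g1, g2⟩ | ⟨g1, g2⟩ | ⟨g1, g2⟩ <;>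
    first
      | exact Fin.ext (by omega)
      | exact absurd (h1.symm.trans g1) (by decide)

lemma key_count {n : ℕ} (hn : 2 ≤ n) (D : Set (Fin n))
    (hD : IsDisjDomSet (SimpleGraph.pathGraph n) D) : n + 1 ≤ 4 * D.ncard := by
  classical
  have h3 : ∀ v, v ∉ D → ¬(∃ u ∈ D, (pathGraph n).Adj v u) →
      ∃ w ∈ D, (w : ℕ) = (v : ℕ) + 2 := by
    intro v hv ha
    rcases hD v hv with h | ⟨w₁, hw₁, w₂, hw₂, hne, hd₁, hd₂⟩
    · exact absurd h ha
    · rcases path_dist_two hd₁ with h1 | h1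
      · exact ⟨w₁, hw₁, h1⟩
      · rcases path_dist_two hd₂ with h2 | h2
        · exact ⟨w₂, hw₂, h2⟩
        · exact absurd (Fin.ext (by omega : (w₁ : ℕ) = (w₂ : ℕ))) hne
  have hDfin : D.Finite := Set.toFinite D
  set DF : Finset (Fin n) := hDfin.toFinset with hDF
  have hmemDF : ∀ x, x ∈ DF ↔ x ∈ D := fun x => hDfin.mem_toFinset
  have hz : (0 : ℕ) < n := by omega
  have ho : (1 : ℕ) < n := by omega
  -- choose the missing pair p
  obtain ⟨p, hpmem, hpnot⟩ :
      ∃ p : Fin n × Fin 4, p ∈ DF ×ˢ (Finset.univ : Finset (Fin 4)) ∧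
        ∀ v, phiFun D h3 v ≠ p := by
    by_cases hzD : (⟨0, hz⟩ : Fin n) ∈ D
    · refine ⟨((⟨0, hz⟩ : Fin n), 0),
        Finset.mem_product.2 ⟨(hmemDF _).2 hzD, Finset.mem_univ _⟩, ?_⟩
      intro v hv
      obtain ⟨-, hspec⟩ := phiFun_spec D h3 v
      have hv1 : ((phiFun D h3 v).1 : ℕ) = 0 := by rw [hv]
      have hv2 : (phiFun D h3 v).2 = (0 : Fin 4) := by rw [hv]
      rcases hspec with ⟨h1, h2⟩ | ⟨h1, h2⟩ | ⟨h1, h2⟩ | ⟨h1, h2⟩ <;>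
        first
          | exact absurd (hv2.symm.trans h1) (by decide)
          | omega
    · have hoD : (⟨1, ho⟩ : Fin n) ∈ D := by
        rcases hD _ hzD with ⟨u, hu, hadj⟩ | ⟨w₁, hw₁, w₂, hw₂, hne, hd₁, hd₂⟩
        · rw [pathGraph_adj] at hadj
          have hzv : ((⟨0, hz⟩ : Fin n) : ℕ) = 0 := rfl
          have hov : ((⟨1, ho⟩ : Fin n) : ℕ) = 1 := rfl
          have : u = (⟨1, ho⟩ : Fin n) := Fin.ext (by omega)
          rwa [← this]
        · have hzv : ((⟨0, hz⟩ : Fin n) : ℕ) = 0 := rfl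
          rcases path_dist_two hd₁ with h1 | h1 <;> rcases path_dist_two hd₂ with h2 | h2 <;>
            exact absurd (Fin.ext (by omega : (w₁ : ℕ) = (w₂ : ℕ))) hne
      refine ⟨((⟨1, ho⟩ : Fin n), 3),
        Finset.mem_product.2 ⟨(hmemDF _).2 hoD, Finset.mem_univ _⟩, ?_⟩
      intro v hv
      obtain ⟨-, hspec⟩ := phiFun_spec D h3 v
      have hv1 : ((phiFun D h3 v).1 : ℕ) = 1 := by rw [hv]
      have hv2 : (phiFun D h3 v).2 = (3 : Fin 4) := by rw [hv]
      rcases hspec with ⟨h1, h2⟩ | ⟨h1, h2⟩ | ⟨h1, h2⟩ | ⟨h1, h2⟩ <;>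
        first
          | exact absurd (hv2.symm.trans h1) (by decide)
          | omega
  -- the counting
  have hmaps : ∀ v ∈ (Finset.univ : Finset (Fin n)),
      phiFun D h3 v ∈ (DF ×ˢ (Finset.univ : Finset (Fin 4))).erase p := by
    intro v _
    refine Finset.mem_erase.2 ⟨hpnot v, Finset.mem_product.2 ⟨?_, Finset.mem_univ _⟩⟩
    exact (hmemDF _).2 (phiFun_spec D h3 v).1
  have hcardle : (Finset.univ : Finset (Fin n)).card ≤
      ((DF ×ˢ (Finset.univ : Finset (Fin 4))).erase p).card :=
    Finset.card_le_card_of_injOn _ hmaps ((phiFun_injective D h3).injOn)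
  have herase : ((DF ×ˢ (Finset.univ : Finset (Fin 4))).erase p).card =
      (DF ×ˢ (Finset.univ : Finset (Fin 4))).card - 1 :=
    Finset.card_erase_of_mem hpmem
  have hprod : (DF ×ˢ (Finset.univ : Finset (Fin 4))).card = DF.card * 4 := by
    rw [Finset.card_product]
    simp
  have hpos : 0 < (DF ×ˢ (Finset.univ : Finset (Fin 4))).card :=
    Finset.card_pos.2 ⟨p, hpmem⟩
  have huniv : (Finset.univ : Finset (Fin n)).card = n := by simp
  have hncard : D.ncard = DF.card := Set.ncard_eq_toFinset_card D hDfin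
  omega

theorem disjDomNum_path_lower_bound (n : ℕ) (hn : 2 ≤ n) :
    ((n : ℚ) + 1) / 4 ≤ (disjDomNum (SimpleGraph.pathGraph n) : ℚ) := by
  have hne : {m | ∃ D : Set (Fin n), IsDisjDomSet (SimpleGraph.pathGraph n) D ∧
      D.ncard = m}.Nonempty := by
    refine ⟨(Set.univ : Set (Fin n)).ncard, Set.univ, ?_, rfl⟩
    intro v hv
    exact absurd (Set.mem_univ v) hv
  have hmem := Nat.sInf_mem hne
  obtain ⟨D, hDdom, hDcard⟩ := hmem
  have hkey : n + 1 ≤ 4 * disjDomNum (SimpleGraph.pathGraph n) := by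
    have := key_count hn D hDdom
    rw [hDcard] at this
    exact this
  rw [div_le_iff₀ (by norm_num : (0 : ℚ) < 4)]
  have : ((n : ℚ) + 1) ≤ 4 * (disjDomNum (SimpleGraph.pathGraph n) : ℚ) := by
    exact_mod_cast hkey
  linarith
end
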